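/- arXiv:quant-ph/0611001 — 5 statements merged into one kernel-verified Lean document; each statement's English description precedes it below -/
import Mathlib

section
/- Let A₁, A₂, B₁, B₂ be Hermitian operators on finite-dimensional Hilbert spaces H_A, H_B respectively, each with operator norm at most 1, and let ρ be a density operator on H_A ⊗ H_B. Then |tr(ρ · (A₁⊗(B₁+B₂) + A₂⊗(B₁−B₂)))| ≤ 2√2 (Tsirelson's bound). -/
/-!
With `a = A₁ ⊗ 1`, `b = A₂ ⊗ 1`, `u = 1 ⊗ B₁`, `v = 1 ⊗ B₂`, the CHSH operator is
`a (u + v) + b (u - v)`, where `a, b` commute with `u, v`. This commutation gives the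
sum-of-squares identity
`2√2 (2√2 - 𝓑) = (√2 a - (u + v))² + (√2 b - (u - v))² + 2 ∑ₓ (1 - x²)`,
so `𝓑 ≤ 2√2` in the Loewner order, and `-2√2 ≤ 𝓑` by replacing `A₁, A₂` with their
negatives. Pairing both bounds with the state `ρ` shows that `tr (ρ 𝓑)` is a real number in
`[-2√2, 2√2]`.
-/

open Matrix Kronecker ComplexOrder

theorem RCLike.norm_le_of_neg_le_of_le {𝕜 : Type*} [RCLike 𝕜] {z : 𝕜} {c : ℝ}
    (h₁ : -(c : 𝕜) ≤ z) (h₂ : z ≤ c) : ‖z‖ ≤ c := by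
  obtain ⟨hre₁, him⟩ := RCLike.le_iff_re_im.mp h₁
  have hre₂ := (RCLike.le_iff_re_im.mp h₂).1
  simp only [map_neg, RCLike.ofReal_re, RCLike.ofReal_im, neg_zero] at hre₁ hre₂ him
  rw [← RCLike.re_add_im z, ← him, RCLike.ofReal_zero, zero_mul, add_zero, RCLike.norm_ofReal]
  exact abs_le.mpr ⟨hre₁, hre₂⟩

theorem chsh_sos {S R : Type*} [CommRing S] [Ring R] [Algebra S R] {s : S} (hs : s * s = 2)
    {a b u v : R} (hau : Commute a u) (hav : Commute a v) (hbu : Commute b u)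
    (hbv : Commute b v) :
    (s • a - (u + v)) * (s • a - (u + v)) + (s • b - (u - v)) * (s • b - (u - v)) +
        (2 : S) • ((1 - a * a) + (1 - b * b) + (1 - u * u) + (1 - v * v)) =
      (2 * s) • ((2 * s) • 1 - (a * (u + v) + b * (u - v))) := by
  simp only [sub_mul, mul_sub, add_mul, mul_add, smul_mul_assoc, mul_smul_comm,
    hau.eq, hav.eq, hbu.eq, hbv.eq]
  linear_combination (norm := module) hs • (a * a + b * b - (4 : S) • 1)

namespace Matrix

section Kronecker

variable {α k k' l l' : Type*}

theorem sub_kronecker [Ring α] (A B : Matrix k k' α) (C : Matrix l l' α) :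
    (A - B) ⊗ₖ C = A ⊗ₖ C - B ⊗ₖ C := by
  ext
  simp [sub_mul]

theorem kronecker_sub [Ring α] (A : Matrix k k' α) (B C : Matrix l l' α) :
    A ⊗ₖ (B - C) = A ⊗ₖ B - A ⊗ₖ C := by
  ext
  simp [mul_sub]

variable [Fintype k] [Fintype l] [DecidableEq k] [DecidableEq l]

theorem kronecker_one_mul_one_kronecker [CommSemiring α] (A : Matrix k k α) (B : Matrix l l α) :
    (A ⊗ₖ 1) * (1 ⊗ₖ B) = A ⊗ₖ B := by
  rw [← mul_kronecker_mul, mul_one, one_mul]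

theorem commute_kronecker_one_one_kronecker [CommSemiring α] (A : Matrix k k α)
    (B : Matrix l l α) : Commute (A ⊗ₖ 1) (1 ⊗ₖ B) := by
  rw [Commute, SemiconjBy, kronecker_one_mul_one_kronecker, ← mul_kronecker_mul, mul_one,
    one_mul]

end Kronecker

variable {𝕜 k l : Type*} [RCLike 𝕜] [Fintype k]

theorem PosSemidef.trace_mul_nonneg {ρ P : Matrix k k 𝕜} (hρ : ρ.PosSemidef)
    (hP : P.PosSemidef) : 0 ≤ (ρ * P).trace := by
  classical
  open scoped MatrixOrder in
  obtain ⟨C, rfl⟩ := CStarAlgebra.nonneg_iff_eq_star_mul_self.mp hρ.nonneg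
  rw [star_eq_conjTranspose, Matrix.mul_assoc, trace_mul_comm]
  exact (hP.mul_mul_conjTranspose_same C).trace_nonneg

theorem IsHermitian.posSemidef_mul_self {X : Matrix k k 𝕜} (hX : X.IsHermitian) :
    (X * X).PosSemidef := by
  simpa only [hX.eq] using posSemidef_conjTranspose_mul_self X

omit [Fintype k] in
theorem IsHermitian.kronecker {A : Matrix k k 𝕜} {B : Matrix l l 𝕜} (hA : A.IsHermitian)
    (hB : B.IsHermitian) : (A ⊗ₖ B).IsHermitian := by
  rw [IsHermitian, conjTranspose_kronecker, hA.eq, hB.eq]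

variable [Fintype l] [DecidableEq k] [DecidableEq l]

theorem PosSemidef.one_sub_kronecker_one_mul_self {A : Matrix k k 𝕜}
    (hA : (1 - A * A).PosSemidef) :
    (1 - (A ⊗ₖ 1) * (A ⊗ₖ (1 : Matrix l l 𝕜))).PosSemidef := by
  rw [← mul_kronecker_mul, one_mul, ← one_kronecker_one, ← sub_kronecker]
  exact hA.kronecker .one

theorem PosSemidef.one_sub_one_kronecker_mul_self {B : Matrix l l 𝕜}
    (hB : (1 - B * B).PosSemidef) :
    (1 - ((1 : Matrix k k 𝕜) ⊗ₖ B) * (1 ⊗ₖ B)).PosSemidef := by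
  rw [← mul_kronecker_mul, one_mul, ← one_kronecker_one, ← kronecker_sub]
  exact PosSemidef.one.kronecker hB

omit [Fintype l] [DecidableEq l]

theorem norm_trace_mul_le_of_posSemidef {ρ X : Matrix k k 𝕜} (hρ : ρ.PosSemidef)
    (hρtr : ρ.trace = 1) {c : ℝ} (hle : (c • 1 - X).PosSemidef)
    (hge : (c • 1 + X).PosSemidef) :
    ‖(ρ * X).trace‖ ≤ c := by
  have htrace (Y : Matrix k k 𝕜) : (ρ * (c • 1 + Y)).trace = c + (ρ * Y).trace := by
    rw [mul_add, trace_add, mul_smul_comm, mul_one, trace_smul, hρtr, RCLike.real_smul_eq_coe_mul,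
      mul_one]
  have hupper := hρ.trace_mul_nonneg hle
  have hlower := hρ.trace_mul_nonneg hge
  rw [sub_eq_add_neg, htrace, mul_neg, trace_neg, ← sub_eq_add_neg, sub_nonneg] at hupper
  rw [htrace, ← neg_le_iff_add_nonneg'] at hlower
  exact RCLike.norm_le_of_neg_le_of_le hlower hupper

variable {a b u v : Matrix k k 𝕜}

theorem chsh_le_two_mul_sqrt_two (ha : a.IsHermitian) (hb : b.IsHermitian)
    (hu : u.IsHermitian) (hv : v.IsHermitian) (ha₁ : (1 - a * a).PosSemidef)
    (hb₁ : (1 - b * b).PosSemidef) (hu₁ : (1 - u * u).PosSemidef) (hv₁ : (1 - v * v).PosSemidef)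
    (hau : Commute a u) (hav : Commute a v) (hbu : Commute b u) (hbv : Commute b v) :
    ((2 * √2) • 1 - (a * (u + v) + b * (u - v))).PosSemidef := by
  have hsqrt : √2 * √2 = 2 := Real.mul_self_sqrt zero_le_two
  have hpos : 0 < 2 * √2 := by positivity
  have hX : (√2 • a - (u + v)).IsHermitian := (ha.smul (.all _)).sub (hu.add hv)
  have hY : (√2 • b - (u - v)).IsHermitian := (hb.smul (.all _)).sub (hu.sub hv)
  have hsum := (hX.posSemidef_mul_self.add hY.posSemidef_mul_self).add
    ((((ha₁.add hb₁).add hu₁).add hv₁).smul (zero_le_two : (0 : ℝ) ≤ 2))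
  rw [chsh_sos hsqrt hau hav hbu hbv] at hsum
  simpa only [inv_smul_smul₀ hpos.ne'] using hsum.smul (inv_nonneg.mpr hpos.le)

theorem abs_chsh_le_two_mul_sqrt_two (ha : a.IsHermitian) (hb : b.IsHermitian)
    (hu : u.IsHermitian) (hv : v.IsHermitian) (ha₁ : (1 - a * a).PosSemidef)
    (hb₁ : (1 - b * b).PosSemidef) (hu₁ : (1 - u * u).PosSemidef) (hv₁ : (1 - v * v).PosSemidef)
    (hau : Commute a u) (hav : Commute a v) (hbu : Commute b u) (hbv : Commute b v) :
    ((2 * √2) • 1 - (a * (u + v) + b * (u - v))).PosSemidef ∧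
      ((2 * √2) • 1 + (a * (u + v) + b * (u - v))).PosSemidef := by
  refine ⟨chsh_le_two_mul_sqrt_two ha hb hu hv ha₁ hb₁ hu₁ hv₁ hau hav hbu hbv, ?_⟩
  have := chsh_le_two_mul_sqrt_two ha.neg hb.neg hu hv (by rwa [neg_mul_neg])
    (by rwa [neg_mul_neg]) hu₁ hv₁ hau.neg_left hav.neg_left hbu.neg_left hbv.neg_left
  rwa [neg_mul, neg_mul, ← neg_add, sub_neg_eq_add] at this

end Matrix

/-- Tsirelson's bound for the CHSH operator. -/
theorem tsirelson_bound {m n : ℕ}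
    (A₁ A₂ : Matrix (Fin m) (Fin m) ℂ) (B₁ B₂ : Matrix (Fin n) (Fin n) ℂ)
    (hA₁ : A₁.IsHermitian) (hA₂ : A₂.IsHermitian)
    (hB₁ : B₁.IsHermitian) (hB₂ : B₂.IsHermitian)
    (hA₁n : (1 - A₁ * A₁).PosSemidef) (hA₂n : (1 - A₂ * A₂).PosSemidef)
    (hB₁n : (1 - B₁ * B₁).PosSemidef) (hB₂n : (1 - B₂ * B₂).PosSemidef)
    (ρ : Matrix (Fin m × Fin n) (Fin m × Fin n) ℂ)
    (hρ : ρ.PosSemidef) (hρtr : ρ.trace = 1) :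
    ‖(ρ * (A₁ ⊗ₖ (B₁ + B₂) + A₂ ⊗ₖ (B₁ - B₂))).trace‖ ≤ 2 * Real.sqrt 2 := by
  have hchsh : A₁ ⊗ₖ (B₁ + B₂) + A₂ ⊗ₖ (B₁ - B₂) =
      (A₁ ⊗ₖ 1) * (1 ⊗ₖ B₁ + 1 ⊗ₖ B₂) + (A₂ ⊗ₖ 1) * (1 ⊗ₖ B₁ - 1 ⊗ₖ B₂) := by
    simp only [mul_add, mul_sub, kronecker_one_mul_one_kronecker, kronecker_add, kronecker_sub]
  obtain ⟨hle, hge⟩ := abs_chsh_le_two_mul_sqrt_two (hA₁.kronecker isHermitian_one)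
    (hA₂.kronecker isHermitian_one) (isHermitian_one.kronecker hB₁)
    (isHermitian_one.kronecker hB₂) hA₁n.one_sub_kronecker_one_mul_self
    hA₂n.one_sub_kronecker_one_mul_self hB₁n.one_sub_one_kronecker_mul_self
    hB₂n.one_sub_one_kronecker_mul_self (commute_kronecker_one_one_kronecker _ _)
    (commute_kronecker_one_one_kronecker _ _) (commute_kronecker_one_one_kronecker _ _)
    (commute_kronecker_one_one_kronecker _ _)
  rw [hchsh]
  exact norm_trace_mul_le_of_posSemidef hρ hρtr hle hge
end

section
/- Let |ψ⟩ be a unit vector in ℂ²⊗ℂ²⊗ℂ² with all real coefficients, ρ = |ψ⟩⟨ψ|, and let T_AB be the 2×2 matrix with entries ⟨X_A X_B⟩, ⟨X_A Z_B⟩, ⟨Z_A X_B⟩, ⟨Z_A Z_B⟩ (expectations in ρ, identity on C). Then tr(T_AB T_ABᵗ) = 1 + ⟨Y_A Y_B⟩² − ⟨Y_A Y_C⟩² − ⟨Y_B Y_C⟩², where Y is the Pauli matrix [[0,−i],[i,0]] and e.g. ⟨Y_A Y_B⟩ = tr((Y⊗Y⊗1)ρ). -/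
open Matrix Kronecker

noncomputable section

def PX : Matrix (Fin 2) (Fin 2) ℂ := !![0, 1; 1, 0]
def PY : Matrix (Fin 2) (Fin 2) ℂ := !![0, -Complex.I; Complex.I, 0]
def PZ : Matrix (Fin 2) (Fin 2) ℂ := !![1, 0; 0, -1]

/-- Expectation tr(M ρ). -/
def expect (ρ M : Matrix (Fin 2 × Fin 2 × Fin 2) (Fin 2 × Fin 2 × Fin 2) ℂ) : ℝ :=
  ((M * ρ).trace).re


lemma expect_vecMulVec (a : Fin 2 × Fin 2 × Fin 2 → ℝ)
    (M : Matrix (Fin 2 × Fin 2 × Fin 2) (Fin 2 × Fin 2 × Fin 2) ℂ) :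
    expect (Matrix.vecMulVec (fun x => ((a x : ℝ) : ℂ))
        (star fun x => ((a x : ℝ) : ℂ))) M =
      ∑ i, ∑ j, (M i j).re * (a j * a i) := by
  unfold expect
  rw [Matrix.trace]
  simp only [Matrix.diag_apply, Matrix.mul_apply, Matrix.vecMulVec_apply, Pi.star_apply,
    Complex.star_def, Complex.conj_ofReal]
  rw [Complex.re_sum]
  refine Finset.sum_congr rfl fun i _ => ?_
  rw [Complex.re_sum]
  refine Finset.sum_congr rfl fun j _ => ?_
  rw [← Complex.ofReal_mul, Complex.mul_re]
  simp

/-- For a real three-qubit pure state, the squared Frobenius norm of the AB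
correlation matrix equals 1 + ⟨Y_AY_B⟩² − ⟨Y_AY_C⟩² − ⟨Y_BY_C⟩². -/
theorem frobenius_eq_yy (ψ : Fin 2 × Fin 2 × Fin 2 → ℂ)
    (hreal : ∀ i, (ψ i).im = 0)
    (hunit : star ψ ⬝ᵥ ψ = 1)
    (ρ : Matrix (Fin 2 × Fin 2 × Fin 2) (Fin 2 × Fin 2 × Fin 2) ℂ)
    (hρ : ρ = Matrix.vecMulVec ψ (star ψ))
    (T : Matrix (Fin 2) (Fin 2) ℝ)
    (hT11 : T 0 0 = expect ρ (PX ⊗ₖ (PX ⊗ₖ 1)))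
    (hT12 : T 0 1 = expect ρ (PX ⊗ₖ (PZ ⊗ₖ 1)))
    (hT21 : T 1 0 = expect ρ (PZ ⊗ₖ (PX ⊗ₖ 1)))
    (hT22 : T 1 1 = expect ρ (PZ ⊗ₖ (PZ ⊗ₖ 1))) :
    (T * Tᵀ).trace =
      1 + expect ρ (PY ⊗ₖ (PY ⊗ₖ 1)) ^ 2
        - expect ρ (PY ⊗ₖ ((1 : Matrix (Fin 2) (Fin 2) ℂ) ⊗ₖ PY)) ^ 2
        - expect ρ ((1 : Matrix (Fin 2) (Fin 2) ℂ) ⊗ₖ (PY ⊗ₖ PY)) ^ 2 := by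

  obtain ⟨a, ha⟩ : ∃ a : Fin 2 × Fin 2 × Fin 2 → ℝ, ψ = fun x => ((a x : ℝ) : ℂ) :=
    ⟨fun x => (ψ x).re, funext fun x => (Complex.ext (by simp) (by simp [hreal x])).symm⟩
  subst ha
  subst hρ
  have hs : a (0,0,0)^2 + a (0,0,1)^2 + a (0,1,0)^2 + a (0,1,1)^2
      + a (1,0,0)^2 + a (1,0,1)^2 + a (1,1,0)^2 + a (1,1,1)^2 = 1 := by
    have h := congrArg Complex.re hunit
    simp only [dotProduct, Fintype.sum_prod_type, Fin.sum_univ_two, Pi.star_apply,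
      Complex.star_def, Complex.conj_ofReal, ← Complex.ofReal_mul, ← Complex.ofReal_add,
      Complex.ofReal_re, Complex.one_re] at h
    linear_combination h
  have hXX : expect (Matrix.vecMulVec (fun x => ((a x : ℝ) : ℂ)) (star fun x => ((a x : ℝ) : ℂ)))
      (PX ⊗ₖ (PX ⊗ₖ 1)) =
      2*(a (0,0,0)*a (1,1,0) + a (0,0,1)*a (1,1,1) + a (0,1,0)*a (1,0,0) + a (0,1,1)*a (1,0,1)) := by
    rw [expect_vecMulVec]
    simp [Fintype.sum_prod_type, Fin.sum_univ_two, kroneckerMap_apply, PX, PZ, PY,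
      Matrix.one_apply]
    ring
  have hXZ : expect (Matrix.vecMulVec (fun x => ((a x : ℝ) : ℂ)) (star fun x => ((a x : ℝ) : ℂ)))
      (PX ⊗ₖ (PZ ⊗ₖ 1)) =
      2*(a (0,0,0)*a (1,0,0) + a (0,0,1)*a (1,0,1) - a (0,1,0)*a (1,1,0) - a (0,1,1)*a (1,1,1)) := by
    rw [expect_vecMulVec]
    simp [Fintype.sum_prod_type, Fin.sum_univ_two, kroneckerMap_apply, PX, PZ, PY,
      Matrix.one_apply]
    ring
  have hZX : expect (Matrix.vecMulVec (fun x => ((a x : ℝ) : ℂ)) (star fun x => ((a x : ℝ) : ℂ)))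
      (PZ ⊗ₖ (PX ⊗ₖ 1)) =
      2*(a (0,0,0)*a (0,1,0) + a (0,0,1)*a (0,1,1) - a (1,0,0)*a (1,1,0) - a (1,0,1)*a (1,1,1)) := by
    rw [expect_vecMulVec]
    simp [Fintype.sum_prod_type, Fin.sum_univ_two, kroneckerMap_apply, PX, PZ, PY,
      Matrix.one_apply]
    ring
  have hZZ : expect (Matrix.vecMulVec (fun x => ((a x : ℝ) : ℂ)) (star fun x => ((a x : ℝ) : ℂ)))
      (PZ ⊗ₖ (PZ ⊗ₖ 1)) =
      a (0,0,0)^2 + a (0,0,1)^2 - a (0,1,0)^2 - a (0,1,1)^2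
        - a (1,0,0)^2 - a (1,0,1)^2 + a (1,1,0)^2 + a (1,1,1)^2 := by
    rw [expect_vecMulVec]
    simp [Fintype.sum_prod_type, Fin.sum_univ_two, kroneckerMap_apply, PX, PZ, PY,
      Matrix.one_apply]
    ring
  have hYY : expect (Matrix.vecMulVec (fun x => ((a x : ℝ) : ℂ)) (star fun x => ((a x : ℝ) : ℂ)))
      (PY ⊗ₖ (PY ⊗ₖ 1)) =
      2*(- a (0,0,0)*a (1,1,0) - a (0,0,1)*a (1,1,1) + a (0,1,0)*a (1,0,0) + a (0,1,1)*a (1,0,1)) := by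
    rw [expect_vecMulVec]
    simp [Fintype.sum_prod_type, Fin.sum_univ_two, kroneckerMap_apply, PX, PZ, PY,
      Matrix.one_apply, Complex.mul_re, Complex.I_re, Complex.I_im]
    ring
  have hYIY : expect (Matrix.vecMulVec (fun x => ((a x : ℝ) : ℂ)) (star fun x => ((a x : ℝ) : ℂ)))
      (PY ⊗ₖ ((1 : Matrix (Fin 2) (Fin 2) ℂ) ⊗ₖ PY)) =
      2*(- a (0,0,0)*a (1,0,1) + a (0,0,1)*a (1,0,0) - a (0,1,0)*a (1,1,1) + a (0,1,1)*a (1,1,0)) := by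
    rw [expect_vecMulVec]
    simp [Fintype.sum_prod_type, Fin.sum_univ_two, kroneckerMap_apply, PX, PZ, PY,
      Matrix.one_apply, Complex.mul_re, Complex.I_re, Complex.I_im]
    ring
  have hIYY : expect (Matrix.vecMulVec (fun x => ((a x : ℝ) : ℂ)) (star fun x => ((a x : ℝ) : ℂ)))
      ((1 : Matrix (Fin 2) (Fin 2) ℂ) ⊗ₖ (PY ⊗ₖ PY)) =
      2*(- a (0,0,0)*a (0,1,1) + a (0,0,1)*a (0,1,0) - a (1,0,0)*a (1,1,1) + a (1,0,1)*a (1,1,0)) := by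
    rw [expect_vecMulVec]
    simp [Fintype.sum_prod_type, Fin.sum_univ_two, kroneckerMap_apply, PX, PZ, PY,
      Matrix.one_apply, Complex.mul_re, Complex.I_re, Complex.I_im]
    ring
  rw [show (T * Tᵀ).trace = T 0 0^2 + T 0 1^2 + T 1 0^2 + T 1 1^2 by
    simp [Matrix.trace, Matrix.mul_apply, Fin.sum_univ_two]; ring]
  rw [hT11, hT12, hT21, hT22, hXX, hXZ, hZX, hZZ, hYY, hYIY, hIYY]
  linear_combination (1 + (a (0,0,0)^2 + a (0,0,1)^2 + a (0,1,0)^2 + a (0,1,1)^2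
      + a (1,0,0)^2 + a (1,0,1)^2 + a (1,1,0)^2 + a (1,1,1)^2)) * hs


end
end

section
/- Let |ψ⟩ be a unit vector in ℂ²⊗ℂ²⊗ℂ² with real coefficients and ρ = |ψ⟩⟨ψ|. Define T_AB and T_AC as the 2×2 correlation matrices with entries ⟨P_A Q_B⟩ and ⟨P_A Q_C⟩ respectively for P, Q ∈ {X, Z}. Then the matrices T_AB T_ABᵗ and T_AC T_ACᵗ commute. -/
open Matrix Kronecker

noncomputable section

set_option maxHeartbeats 4000000 in
/-- For a real three-qubit pure state, T_AB T_ABᵗ and T_AC T_ACᵗ commute. -/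
theorem correlation_matrices_commute (ψ : Fin 2 × Fin 2 × Fin 2 → ℂ)
    (hreal : ∀ i, (ψ i).im = 0)
    (hunit : star ψ ⬝ᵥ ψ = 1)
    (ρ : Matrix (Fin 2 × Fin 2 × Fin 2) (Fin 2 × Fin 2 × Fin 2) ℂ)
    (hρ : ρ = Matrix.vecMulVec ψ (star ψ))
    (TAB TAC : Matrix (Fin 2) (Fin 2) ℝ)
    (hAB11 : TAB 0 0 = expect ρ (PX ⊗ₖ (PX ⊗ₖ 1)))
    (hAB12 : TAB 0 1 = expect ρ (PX ⊗ₖ (PZ ⊗ₖ 1)))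
    (hAB21 : TAB 1 0 = expect ρ (PZ ⊗ₖ (PX ⊗ₖ 1)))
    (hAB22 : TAB 1 1 = expect ρ (PZ ⊗ₖ (PZ ⊗ₖ 1)))
    (hAC11 : TAC 0 0 = expect ρ (PX ⊗ₖ ((1 : Matrix (Fin 2) (Fin 2) ℂ) ⊗ₖ PX)))
    (hAC12 : TAC 0 1 = expect ρ (PX ⊗ₖ ((1 : Matrix (Fin 2) (Fin 2) ℂ) ⊗ₖ PZ)))
    (hAC21 : TAC 1 0 = expect ρ (PZ ⊗ₖ ((1 : Matrix (Fin 2) (Fin 2) ℂ) ⊗ₖ PX)))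
    (hAC22 : TAC 1 1 = expect ρ (PZ ⊗ₖ ((1 : Matrix (Fin 2) (Fin 2) ℂ) ⊗ₖ PZ))) :
    Commute (TAB * TABᵀ) (TAC * TACᵀ) := by
  set r : Fin 2 × Fin 2 × Fin 2 → ℝ := fun i => (ψ i).re with hr
  have hψ : ψ = fun i => (r i : ℂ) := by
    funext i
    exact Complex.ext (by simp [hr]) (by simp [hr, hreal i])
  rw [hψ] at hρ
  subst hρ
  simp only [expect, Matrix.trace, Matrix.diag, Matrix.mul_apply, Matrix.vecMulVec_apply,
    Matrix.kroneckerMap_apply, Fintype.sum_prod_type, Fin.sum_univ_two, PX, PZ,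
    Matrix.one_apply, Pi.star_apply, RCLike.star_def, Complex.conj_ofReal,
    Matrix.cons_val', Matrix.cons_val_zero, Matrix.cons_val_one, Matrix.head_cons,
    Matrix.empty_val', Matrix.cons_val_fin_one, Matrix.head_fin_const]
      at hAB11 hAB12 hAB21 hAB22 hAC11 hAC12 hAC21 hAC22
  norm_num at hAB11 hAB12 hAB21 hAB22 hAC11 hAC12 hAC21 hAC22
  unfold Commute SemiconjBy
  ext i j
  fin_cases i <;> fin_cases j <;>
    simp only [Matrix.mul_apply, Matrix.transpose_apply, Fin.sum_univ_two, Fin.isValue,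
      Fin.zero_eta, Fin.mk_one, hAB11, hAB12, hAB21, hAB22, hAC11, hAC12, hAC21, hAC22] <;>
    ring
end
end

section
/- Let |ψ⟩ be a unit vector in ℂ²⊗ℂ²⊗ℂ² with real coefficients. Then the maximum of the CHSH value ⟨𝓑_AB⟩ over real traceless ±1-observables A₁, A₂, B₁, B₂ (acting on qubits A and B, identity on C) equals 2√(1 + ⟨Y_A Y_B⟩² − ⟨Y_A Y_C⟩² − ⟨Y_B Y_C⟩²). -/
/-!
Restricted to real observables `cos θ Z + sin θ X`, the CHSH value only sees the real `2 × 2`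
correlation matrix `T_ij = ⟨σ_i ⊗ σ_j ⊗ 1⟩`, `σ ∈ {Z, X}`: it equals
`a₁ ⬝ T (b₁ + b₂) + a₂ ⬝ T (b₁ - b₂)` for unit vectors `aᵢ, bⱼ` of the plane. Writing
`β₁ = μ + δ`, `β₂ = μ - δ`, the vectors `b₁ ± b₂` are `2 cos δ · e_μ` and `2 sin δ · e_μ⊥`, so the
value is at most `2 √(|T e_μ|² + |T e_μ⊥|²) = 2 ‖T‖_F`, with equality for suitable angles
(the real-plane case of the Horodecki criterion). For a real normalized three-qubit state,
`‖T‖_F² = 1 + ⟨Y_A Y_B⟩² - ⟨Y_A Y_C⟩² - ⟨Y_B Y_C⟩²`, an identity of quartic polynomials in the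
eight amplitudes.
-/

open Matrix Kronecker

noncomputable section

def obs (θ : ℝ) : Matrix (Fin 2) (Fin 2) ℂ :=
  (Real.cos θ : ℂ) • PZ + (Real.sin θ : ℂ) • PX

open Real

def dir (θ : ℝ) : Fin 2 → ℝ := ![cos θ, sin θ]

lemma dir_dotProduct (θ : ℝ) (v : Fin 2 → ℝ) : dir θ ⬝ᵥ v = cos θ * v 0 + sin θ * v 1 := by
  rw [vec2_dotProduct]; rfl

lemma sq_dir_dotProduct_le (θ : ℝ) (v : Fin 2 → ℝ) : (dir θ ⬝ᵥ v) ^ 2 ≤ v ⬝ᵥ v := by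
  rw [dir_dotProduct, vec2_dotProduct]
  nlinarith [sq_nonneg (sin θ * v 0 - cos θ * v 1), sin_sq_add_cos_sq θ]

lemma exists_dir_dotProduct_eq_sqrt (v : Fin 2 → ℝ) : ∃ θ, dir θ ⬝ᵥ v = √(v ⬝ᵥ v) := by
  set z : ℂ := ⟨v 0, v 1⟩
  have hre : ‖z‖ * cos z.arg = v 0 := Complex.norm_mul_cos_arg z
  have him : ‖z‖ * sin z.arg = v 1 := Complex.norm_mul_sin_arg z
  have hsq : ‖z‖ ^ 2 = v 0 ^ 2 + v 1 ^ 2 := by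
    rw [Complex.sq_norm, Complex.normSq_mk]; ring
  have hz : √(v ⬝ᵥ v) = ‖z‖ := by
    rw [← sqrt_sq (norm_nonneg z), hsq, vec2_dotProduct, sq, sq]
  refine ⟨z.arg, ?_⟩
  rw [hz, dir_dotProduct]
  rcases (norm_nonneg z).eq_or_lt with h0 | hpos
  · rw [← h0] at hre him ⊢
    rw [← hre, ← him]
    ring
  · apply mul_left_cancel₀ hpos.ne'
    linear_combination v 0 * hre + v 1 * him - hsq

lemma dir_add_dir (μ δ : ℝ) : dir (μ + δ) + dir (μ - δ) = (2 * cos δ) • dir μ := by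
  simp only [dir, vec2_add, smul_cons, smul_empty, smul_eq_mul, cos_add, cos_sub, sin_add, sin_sub]
  congr 2 <;> ring

lemma dir_sub_dir (μ δ : ℝ) : dir (μ + δ) - dir (μ - δ) = (2 * sin δ) • dir (μ + π / 2) := by
  simp only [dir, cos_add_pi_div_two, sin_add_pi_div_two]
  simp only [cons_sub_cons, empty_sub_empty, smul_cons, smul_empty, smul_eq_mul, cos_add, cos_sub,
    sin_add, sin_sub]
  congr 2 <;> ring

lemma mulVec_dir_dotProduct_add_mulVec_dir_perp (T : Matrix (Fin 2) (Fin 2) ℝ) (μ : ℝ) :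
    (T *ᵥ dir μ) ⬝ᵥ (T *ᵥ dir μ) + (T *ᵥ dir (μ + π / 2)) ⬝ᵥ (T *ᵥ dir (μ + π / 2)) =
      ∑ i, ∑ j, T i j ^ 2 := by
  simp only [Fin.sum_univ_two, vec2_dotProduct, mulVec, dir, cos_add_pi_div_two,
    sin_add_pi_div_two, cons_val_zero, cons_val_one]
  linear_combination (T 0 0 ^ 2 + T 0 1 ^ 2 + T 1 0 ^ 2 + T 1 1 ^ 2) * sin_sq_add_cos_sq μ

def chsh (T : Matrix (Fin 2) (Fin 2) ℝ) (α₁ α₂ β₁ β₂ : ℝ) : ℝ :=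
  dir α₁ ⬝ᵥ T *ᵥ (dir β₁ + dir β₂) + dir α₂ ⬝ᵥ T *ᵥ (dir β₁ - dir β₂)

lemma chsh_add_sub (T : Matrix (Fin 2) (Fin 2) ℝ) (α₁ α₂ μ δ : ℝ) :
    chsh T α₁ α₂ (μ + δ) (μ - δ) =
      2 * (dir δ ⬝ᵥ ![dir α₁ ⬝ᵥ T *ᵥ dir μ, dir α₂ ⬝ᵥ T *ᵥ dir (μ + π / 2)]) := by
  rw [chsh, dir_add_dir, dir_sub_dir, mulVec_smul, mulVec_smul, dotProduct_smul, dotProduct_smul,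
    dir_dotProduct δ]
  simp only [smul_eq_mul, cons_val_zero, cons_val_one]
  ring

lemma chsh_le (T : Matrix (Fin 2) (Fin 2) ℝ) (α₁ α₂ β₁ β₂ : ℝ) :
    chsh T α₁ α₂ β₁ β₂ ≤ 2 * √(∑ i, ∑ j, T i j ^ 2) := by
  obtain ⟨μ, δ, rfl, rfl⟩ : ∃ μ δ : ℝ, β₁ = μ + δ ∧ β₂ = μ - δ :=
    ⟨(β₁ + β₂) / 2, (β₁ - β₂) / 2, by ring, by ring⟩
  set v : Fin 2 → ℝ := ![dir α₁ ⬝ᵥ T *ᵥ dir μ, dir α₂ ⬝ᵥ T *ᵥ dir (μ + π / 2)]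
  have hv : v ⬝ᵥ v ≤ ∑ i, ∑ j, T i j ^ 2 := by
    rw [← mulVec_dir_dotProduct_add_mulVec_dir_perp T μ, vec2_dotProduct']
    have h₁ := sq_dir_dotProduct_le α₁ (T *ᵥ dir μ)
    have h₂ := sq_dir_dotProduct_le α₂ (T *ᵥ dir (μ + π / 2))
    nlinarith
  rw [chsh_add_sub]
  gcongr
  exact (le_sqrt_of_sq_le (sq_dir_dotProduct_le δ v)).trans (sqrt_le_sqrt hv)

lemma exists_chsh_eq (T : Matrix (Fin 2) (Fin 2) ℝ) :
    ∃ α₁ α₂ β₁ β₂, chsh T α₁ α₂ β₁ β₂ = 2 * √(∑ i, ∑ j, T i j ^ 2) := by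
  have hT := mulVec_dir_dotProduct_add_mulVec_dir_perp T 0
  set u := T *ᵥ dir 0
  set w := T *ᵥ dir (0 + π / 2)
  obtain ⟨α₁, h₁⟩ := exists_dir_dotProduct_eq_sqrt u
  obtain ⟨α₂, h₂⟩ := exists_dir_dotProduct_eq_sqrt w
  obtain ⟨δ, hδ⟩ := exists_dir_dotProduct_eq_sqrt ![√(u ⬝ᵥ u), √(w ⬝ᵥ w)]
  have hnorm : ![√(u ⬝ᵥ u), √(w ⬝ᵥ w)] ⬝ᵥ ![√(u ⬝ᵥ u), √(w ⬝ᵥ w)] = u ⬝ᵥ u + w ⬝ᵥ w := by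
    have hu : 0 ≤ u ⬝ᵥ u := dotProduct_star_self_nonneg u
    have hw : 0 ≤ w ⬝ᵥ w := dotProduct_star_self_nonneg w
    rw [vec2_dotProduct', mul_self_sqrt hu, mul_self_sqrt hw]
  refine ⟨α₁, α₂, 0 + δ, 0 - δ, ?_⟩
  rw [chsh_add_sub, h₁, h₂, hδ, hnorm, hT]

lemma isGreatest_chsh (T : Matrix (Fin 2) (Fin 2) ℝ) :
    IsGreatest {x | ∃ α₁ α₂ β₁ β₂, x = chsh T α₁ α₂ β₁ β₂} (2 * √(∑ i, ∑ j, T i j ^ 2)) := by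
  obtain ⟨α₁, α₂, β₁, β₂, h⟩ := exists_chsh_eq T
  exact ⟨⟨α₁, α₂, β₁, β₂, h.symm⟩, fun x ⟨α₁, α₂, β₁, β₂, hx⟩ => hx ▸ chsh_le T α₁ α₂ β₁ β₂⟩

def zxPauli : Fin 2 → Matrix (Fin 2) (Fin 2) ℂ := ![PZ, PX]

def realObs (a : Fin 2 → ℝ) : Matrix (Fin 2) (Fin 2) ℂ := (a 0 : ℂ) • PZ + (a 1 : ℂ) • PX

lemma obs_eq_realObs (θ : ℝ) : obs θ = realObs (dir θ) := rfl

lemma realObs_add (a b : Fin 2 → ℝ) : realObs (a + b) = realObs a + realObs b := by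
  simp only [realObs, Pi.add_apply, Complex.ofReal_add, add_smul]; abel

lemma realObs_sub (a b : Fin 2 → ℝ) : realObs (a - b) = realObs a - realObs b := by
  simp only [realObs, Pi.sub_apply, Complex.ofReal_sub, sub_smul]; abel

section correlation

variable {n : Type*} [Fintype n] [DecidableEq n]

def correlationZX (ψ : Fin 2 × Fin 2 × n → ℂ) : Matrix (Fin 2) (Fin 2) ℝ :=
  of fun i j => (star ψ ⬝ᵥ ((zxPauli i ⊗ₖ (zxPauli j ⊗ₖ (1 : Matrix n n ℂ))) *ᵥ ψ)).re

lemma re_expectation_realObs_kronecker (ψ : Fin 2 × Fin 2 × n → ℂ) (a b : Fin 2 → ℝ) :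
    (star ψ ⬝ᵥ ((realObs a ⊗ₖ (realObs b ⊗ₖ (1 : Matrix n n ℂ))) *ᵥ ψ)).re =
      a ⬝ᵥ correlationZX ψ *ᵥ b := by
  simp only [realObs, add_kronecker, kronecker_add, smul_kronecker, kronecker_smul, add_mulVec,
    smul_mulVec, dotProduct_add, dotProduct_smul, Complex.add_re]
  simp only [vec2_dotProduct, mulVec, correlationZX, of_apply, zxPauli, cons_val_zero,
    cons_val_one, smul_eq_mul, Complex.add_re, Complex.re_ofReal_mul]
  ring

lemma re_expectation_chsh (ψ : Fin 2 × Fin 2 × n → ℂ) (α₁ α₂ β₁ β₂ : ℝ) :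
    (star ψ ⬝ᵥ ((obs α₁ ⊗ₖ ((obs β₁ + obs β₂) ⊗ₖ (1 : Matrix n n ℂ)) +
        obs α₂ ⊗ₖ ((obs β₁ - obs β₂) ⊗ₖ (1 : Matrix n n ℂ))) *ᵥ ψ)).re =
      chsh (correlationZX ψ) α₁ α₂ β₁ β₂ := by
  simp only [obs_eq_realObs, ← realObs_add, ← realObs_sub, add_mulVec, dotProduct_add,
    Complex.add_re, re_expectation_realObs_kronecker, chsh]

end correlation

lemma sum_sq_correlationZX (ψ : Fin 2 × Fin 2 × Fin 2 → ℂ) (hreal : ∀ i, (ψ i).im = 0) :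
    ∑ i, ∑ j, correlationZX ψ i j ^ 2 = (star ψ ⬝ᵥ ψ).re ^ 2 +
        ((star ψ ⬝ᵥ ((PY ⊗ₖ (PY ⊗ₖ (1 : Matrix (Fin 2) (Fin 2) ℂ))) *ᵥ ψ)).re) ^ 2 -
        ((star ψ ⬝ᵥ ((PY ⊗ₖ ((1 : Matrix (Fin 2) (Fin 2) ℂ) ⊗ₖ PY)) *ᵥ ψ)).re) ^ 2 -
        ((star ψ ⬝ᵥ (((1 : Matrix (Fin 2) (Fin 2) ℂ) ⊗ₖ (PY ⊗ₖ PY)) *ᵥ ψ)).re) ^ 2 := by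
  obtain ⟨f, rfl⟩ : ∃ f : Fin 2 × Fin 2 × Fin 2 → ℝ, ψ = fun i => (f i : ℂ) :=
    ⟨fun i => (ψ i).re, funext fun i => Complex.ext rfl (by simp [hreal i])⟩
  simp only [correlationZX, dotProduct, Pi.star_apply, RCLike.star_def, Complex.conj_ofReal, mulVec,
    zxPauli, PZ, PX, PY, kroneckerMap_apply, one_apply, mul_ite, mul_one, mul_zero, ite_mul, zero_mul,
    Fintype.sum_prod_type, Finset.sum_ite_eq, Finset.mem_univ, ↓reduceIte, Fin.sum_univ_two,
    Fin.isValue, Complex.add_re, Complex.mul_re, Complex.ofReal_re, Complex.mul_im,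
    Complex.ofReal_im, sub_zero, Complex.add_im, zero_add, of_apply, cons_val_zero, cons_val',
    cons_val_fin_one, Complex.one_re, Complex.one_im, cons_val_one, Complex.zero_re,
    Complex.zero_im, sub_self, add_zero, Complex.neg_re, mul_neg, Complex.neg_im, neg_zero, neg_mul,
    one_mul, neg_neg, Complex.I_mul_I, Finset.sum_ite_irrel, Finset.sum_const_zero]
  ring

/-- Lemma 2 of the paper: the maximum CHSH value ⟨B_AB⟩ over real traceless
observables, for a real three-qubit pure state, equals
2√(1 + ⟨Y_AY_B⟩² − ⟨Y_AY_C⟩² − ⟨Y_BY_C⟩²). -/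
theorem chsh_max_real_state (ψ : Fin 2 × Fin 2 × Fin 2 → ℂ)
    (hreal : ∀ i, (ψ i).im = 0)
    (hunit : star ψ ⬝ᵥ ψ = 1) :
    IsGreatest
      {x : ℝ | ∃ α₁ α₂ β₁ β₂ : ℝ,
        x = (star ψ ⬝ᵥ ((obs α₁ ⊗ₖ ((obs β₁ + obs β₂) ⊗ₖ (1 : Matrix (Fin 2) (Fin 2) ℂ)) +
                         obs α₂ ⊗ₖ ((obs β₁ - obs β₂) ⊗ₖ (1 : Matrix (Fin 2) (Fin 2) ℂ))) *ᵥ ψ)).re}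
      (2 * Real.sqrt (1 +
        ((star ψ ⬝ᵥ ((PY ⊗ₖ (PY ⊗ₖ (1 : Matrix (Fin 2) (Fin 2) ℂ))) *ᵥ ψ)).re) ^ 2 -
        ((star ψ ⬝ᵥ ((PY ⊗ₖ ((1 : Matrix (Fin 2) (Fin 2) ℂ) ⊗ₖ PY)) *ᵥ ψ)).re) ^ 2 -
        ((star ψ ⬝ᵥ (((1 : Matrix (Fin 2) (Fin 2) ℂ) ⊗ₖ (PY ⊗ₖ PY)) *ᵥ ψ)).re) ^ 2)) := by
  have hsum := sum_sq_correlationZX ψ hreal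
  rw [hunit, Complex.one_re, one_pow] at hsum
  rw [← hsum]
  simp only [re_expectation_chsh]
  exact isGreatest_chsh (correlationZX ψ)

end
end

section
/- For t ∈ [0, π/4], let c_± = (1/2)√(1 ± √2 sin t) and |ψ⟩ = c₋(|010⟩ + |011⟩) + c₊(|100⟩ + |101⟩) ∈ ℂ²⊗ℂ²⊗ℂ². Then |ψ⟩ is a unit vector, and there exist ±1-observables A₁, A₂, B₁, B₂, C₁, C₂ on the respective qubits such that ⟨𝓑_AB⟩ = 2√2 cos t and ⟨𝓑_AC⟩ = 2√2 sin t; in particular ⟨𝓑_AB⟩² + ⟨𝓑_AC⟩² = 8, so the monogamy bound is tight. -/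
/-!
Write `ψ = (c₋|01⟩ + c₊|10⟩) ⊗ (|0⟩ + |1⟩)` and take all observables in the real span of
`σ_z, σ_x`: `A₁ = σ_z`, `A₂ = σ_x`, `C₁ = C₂ = -σ_x`, `B₁,₂ = u σ_z ± v σ_x` with `u² + v² = 1`.
Then `⟨𝓑_AC⟩ = 4 (c₊² - c₋²) = 2√2 sin t`, while
`⟨𝓑_AB⟩ = -2u + 2v √(cos 2t)` because `c₋ c₊ = √(1 - 2 sin² t) / 4 = √(cos 2t) / 4`.
The unit vector `(u, v)` parallel to `(-1, √(cos 2t))` makes this `2 √(1 + cos 2t) = 2√2 cos t`.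
-/

open Matrix Kronecker

/-- The observable `u σ_z + v σ_x`. -/
def zxObservable (u v : ℝ) : Matrix (Fin 2) (Fin 2) ℂ := !![(u : ℂ), v; v, -u]

theorem isHermitian_zxObservable (u v : ℝ) : (zxObservable u v).IsHermitian := by
  ext i j; fin_cases i <;> fin_cases j <;> simp [zxObservable, conjTranspose_apply]

theorem zxObservable_mul_self {u v : ℝ} (h : u ^ 2 + v ^ 2 = 1) :
    zxObservable u v * zxObservable u v = 1 := by
  have hC : (u : ℂ) ^ 2 + (v : ℂ) ^ 2 = 1 := by exact_mod_cast h
  ext i j; fin_cases i <;> fin_cases j <;>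
    simp only [zxObservable, mul_apply, Fin.sum_univ_two, of_apply, cons_val', cons_val_zero,
      cons_val_one, cons_val_fin_one, one_apply, Fin.isValue, Fin.zero_eta, Fin.mk_one,
      mul_neg, neg_mul, neg_neg, zero_ne_one, one_ne_zero, ↓reduceIte] <;>
    first | ring1 | linear_combination hC

def monogamyState (cm cp : ℝ) : Fin 2 × Fin 2 × Fin 2 → ℂ := fun p =>
  if p.1 = 0 ∧ p.2.1 = 1 then (cm : ℂ)
  else if p.1 = 1 ∧ p.2.1 = 0 then (cp : ℂ) else 0

section Expectations

variable (cm cp : ℝ)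

theorem dotProduct_monogamyState_self :
    star (monogamyState cm cp) ⬝ᵥ monogamyState cm cp = ((2 * (cm ^ 2 + cp ^ 2) : ℝ) : ℂ) := by
  simp [monogamyState, dotProduct, Fintype.sum_prod_type, Fin.sum_univ_two]
  ring

theorem chshAB_monogamyState (u v : ℝ) :
    star (monogamyState cm cp) ⬝ᵥ
      ((zxObservable 1 0 ⊗ₖ
          ((zxObservable u v + zxObservable u (-v)) ⊗ₖ (1 : Matrix (Fin 2) (Fin 2) ℂ)) +
        zxObservable 0 1 ⊗ₖ
          ((zxObservable u v - zxObservable u (-v)) ⊗ₖ (1 : Matrix (Fin 2) (Fin 2) ℂ)))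
        *ᵥ monogamyState cm cp) =
      ((-4 * u * (cm ^ 2 + cp ^ 2) + 8 * v * (cm * cp) : ℝ) : ℂ) := by
  simp [monogamyState, zxObservable, dotProduct, mulVec, Fintype.sum_prod_type,
    Fin.sum_univ_two, one_apply]
  ring

theorem chshAC_monogamyState :
    star (monogamyState cm cp) ⬝ᵥ
      ((zxObservable 1 0 ⊗ₖ
          ((1 : Matrix (Fin 2) (Fin 2) ℂ) ⊗ₖ (zxObservable 0 (-1) + zxObservable 0 (-1))) +
        zxObservable 0 1 ⊗ₖ
          ((1 : Matrix (Fin 2) (Fin 2) ℂ) ⊗ₖ (zxObservable 0 (-1) - zxObservable 0 (-1))))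
        *ᵥ monogamyState cm cp) = ((4 * (cp ^ 2 - cm ^ 2) : ℝ) : ℂ) := by
  simp [monogamyState, zxObservable, dotProduct, mulVec, Fintype.sum_prod_type,
    Fin.sum_univ_two, one_apply]
  ring

end Expectations

theorem sq_half_mul_sqrt {x : ℝ} (hx : 0 ≤ x) : (1 / 2 * √x) ^ 2 = x / 4 := by
  rw [mul_pow, Real.sq_sqrt hx]; ring

theorem half_mul_sqrt_one_sub_mul_half_mul_sqrt_one_add {s : ℝ} (hs : s ≤ 1) :
    1 / 2 * √(1 - s) * (1 / 2 * √(1 + s)) = √(1 - s ^ 2) / 4 := by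
  rw [show 1 - s ^ 2 = (1 - s) * (1 + s) by ring, Real.sqrt_mul (by linarith)]; ring

theorem chsh_direction_sq_add_sq {c w : ℝ} (hc : 0 < c) (hw : w ^ 2 = 2 * c ^ 2 - 1) :
    (-1 / (√2 * c)) ^ 2 + (w / (√2 * c)) ^ 2 = 1 := by
  have h2 : √2 ^ 2 = 2 := Real.sq_sqrt zero_le_two
  field_simp
  linear_combination hw - c ^ 2 * h2

theorem chsh_direction_value {c w : ℝ} (hc : 0 < c) (hw : w ^ 2 = 2 * c ^ 2 - 1) :
    -2 * (-1 / (√2 * c)) + 2 * (w / (√2 * c)) * w = 2 * √2 * c := by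
  have h2 : √2 ^ 2 = 2 := Real.sq_sqrt zero_le_two
  field_simp
  linear_combination hw - c ^ 2 * h2

/-- Tightness of the monogamy trade-off: the family of states
|ψ⟩ = c₋(|010⟩+|011⟩) + c₊(|100⟩+|101⟩) achieves ⟨B_AB⟩ = 2√2 cos t and
⟨B_AC⟩ = 2√2 sin t, so ⟨B_AB⟩² + ⟨B_AC⟩² = 8. -/
theorem monogamy_tight (t : ℝ) (ht : t ∈ Set.Icc 0 (Real.pi / 4))
    (cm cp : ℝ)
    (hcm : cm = (1 / 2) * Real.sqrt (1 - Real.sqrt 2 * Real.sin t))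
    (hcp : cp = (1 / 2) * Real.sqrt (1 + Real.sqrt 2 * Real.sin t))
    (ψ : Fin 2 × Fin 2 × Fin 2 → ℂ)
    (hψ : ψ = fun p =>
      if p.1 = 0 ∧ p.2.1 = 1 then (cm : ℂ)
      else if p.1 = 1 ∧ p.2.1 = 0 then (cp : ℂ) else 0) :
    star ψ ⬝ᵥ ψ = 1 ∧
    ∃ A₁ A₂ B₁ B₂ C₁ C₂ : Matrix (Fin 2) (Fin 2) ℂ,
      A₁.IsHermitian ∧ A₂.IsHermitian ∧ B₁.IsHermitian ∧ B₂.IsHermitian ∧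
      C₁.IsHermitian ∧ C₂.IsHermitian ∧
      A₁ * A₁ = 1 ∧ A₂ * A₂ = 1 ∧ B₁ * B₁ = 1 ∧ B₂ * B₂ = 1 ∧
      C₁ * C₁ = 1 ∧ C₂ * C₂ = 1 ∧
      (star ψ ⬝ᵥ ((A₁ ⊗ₖ ((B₁ + B₂) ⊗ₖ (1 : Matrix (Fin 2) (Fin 2) ℂ)) +
                   A₂ ⊗ₖ ((B₁ - B₂) ⊗ₖ (1 : Matrix (Fin 2) (Fin 2) ℂ))) *ᵥ ψ)).re =
        2 * Real.sqrt 2 * Real.cos t ∧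
      (star ψ ⬝ᵥ ((A₁ ⊗ₖ ((1 : Matrix (Fin 2) (Fin 2) ℂ) ⊗ₖ (C₁ + C₂)) +
                   A₂ ⊗ₖ ((1 : Matrix (Fin 2) (Fin 2) ℂ) ⊗ₖ (C₁ - C₂))) *ᵥ ψ)).re =
        2 * Real.sqrt 2 * Real.sin t ∧
      (2 * Real.sqrt 2 * Real.cos t) ^ 2 + (2 * Real.sqrt 2 * Real.sin t) ^ 2 = 8 := by
  obtain ⟨ht₀, ht₁⟩ := ht
  have hcos : 0 < Real.cos t :=
    Real.cos_pos_of_mem_Ioo ⟨by linarith [Real.pi_pos], by linarith [Real.pi_pos]⟩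
  have hcos2 : 0 ≤ Real.cos (2 * t) :=
    Real.cos_nonneg_of_mem_Icc ⟨by linarith [Real.pi_pos], by linarith⟩
  set s := √2 * Real.sin t
  have hs : s ^ 2 = 1 - Real.cos (2 * t) := by
    rw [mul_pow, Real.sq_sqrt zero_le_two, Real.cos_two_mul, Real.cos_sq']; ring
  obtain ⟨hs₀, hs₁⟩ := abs_le.mp ((sq_le_one_iff_abs_le_one s).mp (by linarith))
  have hcm2 : cm ^ 2 = (1 - s) / 4 := hcm ▸ sq_half_mul_sqrt (by linarith)
  have hcp2 : cp ^ 2 = (1 + s) / 4 := hcp ▸ sq_half_mul_sqrt (by linarith)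
  have hsum : cm ^ 2 + cp ^ 2 = 1 / 2 := by rw [hcm2, hcp2]; ring
  have hprod : cm * cp = √(Real.cos (2 * t)) / 4 := by
    rw [hcm, hcp, half_mul_sqrt_one_sub_mul_half_mul_sqrt_one_add hs₁, hs, sub_sub_cancel]
  have hw : √(Real.cos (2 * t)) ^ 2 = 2 * Real.cos t ^ 2 - 1 := by
    rw [Real.sq_sqrt hcos2, Real.cos_two_mul]
  obtain rfl : ψ = monogamyState cm cp := hψ
  set u := -1 / (√2 * Real.cos t)
  set v := √(Real.cos (2 * t)) / (√2 * Real.cos t)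
  have huv : u ^ 2 + v ^ 2 = 1 := chsh_direction_sq_add_sq hcos hw
  refine ⟨?_, zxObservable 1 0, zxObservable 0 1, zxObservable u v, zxObservable u (-v),
    zxObservable 0 (-1), zxObservable 0 (-1), isHermitian_zxObservable _ _,
    isHermitian_zxObservable _ _, isHermitian_zxObservable _ _, isHermitian_zxObservable _ _,
    isHermitian_zxObservable _ _, isHermitian_zxObservable _ _, zxObservable_mul_self (by norm_num),
    zxObservable_mul_self (by norm_num), zxObservable_mul_self huv,
    zxObservable_mul_self (by rwa [neg_sq]), zxObservable_mul_self (by norm_num),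
    zxObservable_mul_self (by norm_num), ?_, ?_, ?_⟩
  · rw [dotProduct_monogamyState_self, hsum]; norm_num
  · rw [chshAB_monogamyState, Complex.ofReal_re, hsum, hprod]
    linear_combination chsh_direction_value hcos hw
  · rw [chshAC_monogamyState, Complex.ofReal_re, hcm2, hcp2]; ring
  · simp only [mul_pow, Real.sq_sqrt zero_le_two]
    linear_combination 8 * Real.cos_sq_add_sin_sq t
end
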